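/- Let h ≥ 2 be an integer, let J = ⌊(h-1)/2⌋ and I = ⌊h/2⌋. Let φ, ε, ξ'₀ be real numbers, let ξ_j (for j = 0, …, J) and δ_i (for i = 1, …, I) be real numbers. Define δ₀ = ξ'₀ + 2·∑_{j=0}^{J} ξ_j, δ = δ₀ + ∑_{i=1}^{I} δ_i, d = h·ξ'₀ + ∑_{j=0}^{J} 2(j+1)(h-j)·ξ_j + ∑_{i=1}^{I} 4i(h-i)·δ_i, and ψ = ε + ((2h−2)/(2h+1))·φ. Assume that (2h+1)·ψ = (h−1)·δ₀ + ∑_{j=1}^{J} 6j(h−1−j)·ξ_j + ∑_{i=1}^{I} (12i(h−i) − (2h+1))·δ_i. Then (2h−2)·φ = 3d − (2h+1)·(δ + ε). -/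

import Mathlib

/-- The algebraic content of the proof of the main theorem: given Yamaki's formula
for `ψ = ε + ((2h−2)/(2h+1))·φ` of a hyperelliptic polarized graph, one deduces
`(2h−2)·φ = 3d − (2h+1)·(δ + ε)`, where `δ₀ = ξ'₀ + 2·∑_{j=0}^{J} ξ_j`,
`δ = δ₀ + ∑_{i=1}^{I} δ_i`,
`d = h·ξ'₀ + ∑_{j=0}^{J} 2(j+1)(h-j)·ξ_j + ∑_{i=1}^{I} 4i(h-i)·δ_i`,
with `J = ⌊(h-1)/2⌋`, `I = ⌊h/2⌋`. -/
theorem reducedbis (h : ℕ) (hh : 2 ≤ h)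
    (φ ε ξ' : ℝ) (ξ : ℕ → ℝ) (δi : ℕ → ℝ)
    (δ₀ δ d ψ : ℝ)
    (hδ₀ : δ₀ = ξ' + 2 * ∑ j ∈ Finset.range ((h - 1) / 2 + 1), ξ j)
    (hδ : δ = δ₀ + ∑ i ∈ Finset.Icc 1 (h / 2), δi i)
    (hd : d = (h : ℝ) * ξ'
        + ∑ j ∈ Finset.range ((h - 1) / 2 + 1), 2 * ((j : ℝ) + 1) * ((h : ℝ) - j) * ξ j
        + ∑ i ∈ Finset.Icc 1 (h / 2), 4 * (i : ℝ) * ((h : ℝ) - i) * δi i)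
    (hψ : ψ = ε + ((2 * (h : ℝ) - 2) / (2 * (h : ℝ) + 1)) * φ)
    (hpsiexplicit : (2 * (h : ℝ) + 1) * ψ
        = ((h : ℝ) - 1) * δ₀
          + ∑ j ∈ Finset.Icc 1 ((h - 1) / 2), 6 * (j : ℝ) * ((h : ℝ) - 1 - j) * ξ j
          + ∑ i ∈ Finset.Icc 1 (h / 2),
              (12 * (i : ℝ) * ((h : ℝ) - i) - (2 * (h : ℝ) + 1)) * δi i) :
    (2 * (h : ℝ) - 2) * φ = 3 * d - (2 * (h : ℝ) + 1) * (δ + ε) := by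
  have hne : (2 * (h : ℝ) + 1) ≠ 0 := by positivity
  have h1 : (2 * (h : ℝ) + 1) * ψ = (2 * (h : ℝ) + 1) * ε + (2 * (h : ℝ) - 2) * φ := by
    rw [hψ]; field_simp
  have key : ∑ j ∈ Finset.Icc 1 ((h - 1) / 2), 6 * (j : ℝ) * ((h : ℝ) - 1 - j) * ξ j
      = ∑ j ∈ Finset.range ((h - 1) / 2 + 1), 6 * (j : ℝ) * ((h : ℝ) - 1 - j) * ξ j := by
    refine Finset.sum_subset ?_ ?_
    · intro x hx; simp only [Finset.mem_Icc] at hx; simp only [Finset.mem_range]; omega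
    · intro x hx hx'
      simp only [Finset.mem_range] at hx
      simp only [Finset.mem_Icc] at hx'
      have : x = 0 := by omega
      subst this; simp
  have hA3 : 3 * ∑ j ∈ Finset.range ((h - 1) / 2 + 1), 2 * ((j : ℝ) + 1) * ((h : ℝ) - j) * ξ j
      = (∑ j ∈ Finset.range ((h - 1) / 2 + 1), 6 * (j : ℝ) * ((h : ℝ) - 1 - j) * ξ j)
        + 6 * (h : ℝ) * ∑ j ∈ Finset.range ((h - 1) / 2 + 1), ξ j := by
    rw [Finset.mul_sum, Finset.mul_sum, ← Finset.sum_add_distrib]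
    exact Finset.sum_congr rfl (fun j _ => by ring)
  have hE3 : ∑ i ∈ Finset.Icc 1 (h / 2),
        (12 * (i : ℝ) * ((h : ℝ) - i) - (2 * (h : ℝ) + 1)) * δi i
      = 3 * (∑ i ∈ Finset.Icc 1 (h / 2), 4 * (i : ℝ) * ((h : ℝ) - i) * δi i)
        - (2 * (h : ℝ) + 1) * ∑ i ∈ Finset.Icc 1 (h / 2), δi i := by
    rw [Finset.mul_sum, Finset.mul_sum, ← Finset.sum_sub_distrib]
    exact Finset.sum_congr rfl (fun i _ => by ring)
  subst hδ₀ hδ hd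
  linear_combination hpsiexplicit - h1 + key - hA3 + hE3
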